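/- Let A ∈ ℝ^{m×m} with all eigenvalues of positive real part, σ ∈ ℝ^{m×n}, L a Lévy process in ℝ^n with E[|L₁|^p] < ∞ for some p ≥ 1, X_t(x) = e^{-At}x + e^{-At}∫₀^t e^{As}σ dL_s, and μ the unique invariant measure. Then for all t ≥ 0 and x ∈ ℝ^m: |e^{-At}x| − W_p(X_t(0), μ) ≤ W_p(X_t(x), μ) ≤ |e^{-At}x| + W_p(X_t(0), μ). -/

import Mathlib

open MeasureTheory

noncomputable def euc {m : ℕ} (v : Fin m → ℝ) : EuclideanSpace ℝ (Fin m) := WithLp.toLp 2 v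

/-- The Wasserstein–Kantorovich–Rubinstein distance of order `p > 0` (with outer
exponent `min {1, 1/p}`), as an infimum over couplings. -/
noncomputable def wassersteinDist {E : Type*} [NormedAddCommGroup E] [MeasurableSpace E]
    (p : ℝ) (μ ν : Measure E) : ℝ :=
  sInf {r : ℝ | ∃ T : Measure (E × E), T.map Prod.fst = μ ∧ T.map Prod.snd = ν ∧
    r = (∫ z, ‖z.1 - z.2‖ ^ p ∂T) ^ min 1 p⁻¹}

section Aux

variable {E : Type*} [NormedAddCommGroup E] [NormedSpace ℝ E] [MeasurableSpace E]
  [BorelSpace E] [SecondCountableTopology E] [CompleteSpace E]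
  {p : ℝ}

lemma aux_cost_eq (hp : 1 ≤ p) (T : Measure (E × E)) :
    (∫ z : E × E, ‖z.1 - z.2‖ ^ p ∂T) ^ p⁻¹
      = (eLpNorm (fun z : E × E => z.1 - z.2) (ENNReal.ofReal p) T).toReal := by
  have hp0 : 0 < p := lt_of_lt_of_le one_pos hp
  have hmeasf : Measurable fun z : E × E => ‖z.1 - z.2‖ ^ p :=
    (measurable_fst.sub measurable_snd).norm.pow_const p
  have h1 : ∫ z : E × E, ‖z.1 - z.2‖ ^ p ∂T
      = (∫⁻ z : E × E, (‖z.1 - z.2‖₊ : ENNReal) ^ p ∂T).toReal := by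
    rw [integral_eq_lintegral_of_nonneg_ae (Filter.Eventually.of_forall fun z =>
        Real.rpow_nonneg (norm_nonneg _) p) hmeasf.aestronglyMeasurable]
    congr 1
    refine lintegral_congr fun z => ?_
    rw [← enorm_eq_nnnorm, ← ofReal_norm, ← ENNReal.ofReal_rpow_of_nonneg (norm_nonneg _) hp0.le]
  rw [h1, eLpNorm_eq_lintegral_rpow_enorm_toReal (by simpa using hp0) ENNReal.ofReal_ne_top,
    ENNReal.toReal_ofReal hp0.le, ENNReal.toReal_rpow, one_div]
  rfl

lemma aux_memLp_id (hp : 1 ≤ p) (ν : Measure E)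
    (hν : ∫⁻ y, (‖y‖₊ : ENNReal) ^ p ∂ν ≠ ⊤) : MemLp id (ENNReal.ofReal p) ν := by
  have hp0 : 0 < p := lt_of_lt_of_le one_pos hp
  refine ⟨aestronglyMeasurable_id, ?_⟩
  rw [eLpNorm_eq_lintegral_rpow_enorm_toReal (by simpa using hp0) ENNReal.ofReal_ne_top,
    ENNReal.toReal_ofReal hp0.le]
  simp only [id_eq]
  exact ENNReal.rpow_lt_top_of_nonneg (by positivity) hν

lemma aux_coupling_memLp (hp : 1 ≤ p) {T : Measure (E × E)} {ν₁ ν₂ : Measure E}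
    (h1 : T.map Prod.fst = ν₁) (h2 : T.map Prod.snd = ν₂)
    (hν₁ : MemLp id (ENNReal.ofReal p) ν₁) (hν₂ : MemLp id (ENNReal.ofReal p) ν₂) :
    MemLp (fun z : E × E => z.1 - z.2) (ENNReal.ofReal p) T := by
  subst h1 h2
  have hf : MemLp (fun z : E × E => z.1) (ENNReal.ofReal p) T :=
    (memLp_map_measure_iff aestronglyMeasurable_id measurable_fst.aemeasurable).mp hν₁
  have hs : MemLp (fun z : E × E => z.2) (ENNReal.ofReal p) T :=
    (memLp_map_measure_iff aestronglyMeasurable_id measurable_snd.aemeasurable).mp hν₂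
  exact hf.sub hs

lemma aux_prob {T : Measure (E × E)} {ν₂ : Measure E} [IsProbabilityMeasure ν₂]
    (h2 : T.map Prod.snd = ν₂) : IsProbabilityMeasure T := by
  constructor
  have := congrArg (fun m : Measure E => m Set.univ) h2
  simpa [Measure.map_apply measurable_snd MeasurableSet.univ] using this

lemma aux_mean_le_cost (hp : 1 ≤ p) {T : Measure (E × E)} {ν₁ ν₂ : Measure E}
    [IsProbabilityMeasure ν₁] [IsProbabilityMeasure ν₂]
    (h1 : T.map Prod.fst = ν₁) (h2 : T.map Prod.snd = ν₂)
    (hν₁ : MemLp id (ENNReal.ofReal p) ν₁) (hν₂ : MemLp id (ENNReal.ofReal p) ν₂) :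
    ‖(∫ y, y ∂ν₁) - ∫ y, y ∂ν₂‖ ≤ (∫ z : E × E, ‖z.1 - z.2‖ ^ p ∂T) ^ p⁻¹ := by
  haveI : IsProbabilityMeasure T := aux_prob h2
  have hq1 : (1 : ENNReal) ≤ ENNReal.ofReal p := by
    rw [← ENNReal.ofReal_one]; exact ENNReal.ofReal_le_ofReal hp
  have hint1 : Integrable (fun z : E × E => z.1) T := by
    have : Integrable id (T.map Prod.fst) := by
      rw [h1]; exact memLp_one_iff_integrable.mp (hν₁.mono_exponent hq1)
    exact (integrable_map_measure aestronglyMeasurable_id measurable_fst.aemeasurable).mp this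
  have hint2 : Integrable (fun z : E × E => z.2) T := by
    have : Integrable id (T.map Prod.snd) := by
      rw [h2]; exact memLp_one_iff_integrable.mp (hν₂.mono_exponent hq1)
    exact (integrable_map_measure aestronglyMeasurable_id measurable_snd.aemeasurable).mp this
  have hF : MemLp (fun z : E × E => z.1 - z.2) (ENNReal.ofReal p) T :=
    aux_coupling_memLp hp h1 h2 hν₁ hν₂
  have e1 : ∫ z : E × E, z.1 ∂T = ∫ y, y ∂ν₁ := by
    rw [← h1]
    exact (integral_map (f := fun y : E => y) measurable_fst.aemeasurable
      aestronglyMeasurable_id).symm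
  have e2 : ∫ z : E × E, z.2 ∂T = ∫ y, y ∂ν₂ := by
    rw [← h2]
    exact (integral_map (f := fun y : E => y) measurable_snd.aemeasurable
      aestronglyMeasurable_id).symm
  have emean : ∫ z : E × E, (z.1 - z.2) ∂T = (∫ y, y ∂ν₁) - ∫ y, y ∂ν₂ := by
    rw [integral_sub hint1 hint2, e1, e2]
  calc ‖(∫ y, y ∂ν₁) - ∫ y, y ∂ν₂‖ = ‖∫ z : E × E, (z.1 - z.2) ∂T‖ := by rw [emean]
    _ ≤ ∫ z : E × E, ‖z.1 - z.2‖ ∂T := norm_integral_le_integral_norm _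
    _ = (eLpNorm (fun z : E × E => z.1 - z.2) 1 T).toReal := by
        rw [integral_norm_eq_lintegral_enorm hF.1, eLpNorm_one_eq_lintegral_enorm]
    _ ≤ (eLpNorm (fun z : E × E => z.1 - z.2) (ENNReal.ofReal p) T).toReal :=
        ENNReal.toReal_mono hF.2.ne (eLpNorm_le_eLpNorm_of_exponent_le hq1 hF.1)
    _ = (∫ z : E × E, ‖z.1 - z.2‖ ^ p ∂T) ^ p⁻¹ := (aux_cost_eq hp T).symm


lemma aux_shift (hp : 1 ≤ p) (ν μ : Measure E) [IsProbabilityMeasure ν] [IsProbabilityMeasure μ]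
    (hν : ∫⁻ y, (‖y‖₊ : ENNReal) ^ p ∂ν ≠ ⊤) (hμ : ∫⁻ y, (‖y‖₊ : ENNReal) ^ p ∂μ ≠ ⊤)
    (u : E) :
    ‖u‖ - wassersteinDist p ν μ ≤ wassersteinDist p (ν.map (u + ·)) μ ∧
    wassersteinDist p (ν.map (u + ·)) μ ≤ ‖u‖ + wassersteinDist p ν μ := by
  have hp0 : 0 < p := lt_of_lt_of_le one_pos hp
  set q : ENNReal := ENNReal.ofReal p with hqdef
  have hq0 : q ≠ 0 := by simpa [hqdef] using hp0
  have hq1 : (1 : ENNReal) ≤ q := by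
    rw [hqdef, ← ENNReal.ofReal_one]; exact ENNReal.ofReal_le_ofReal hp
  have hνLp : MemLp id q ν := aux_memLp_id hp ν hν
  have hμLp : MemLp id q μ := aux_memLp_id hp μ hμ
  have hadd : Measurable fun y : E => u + y := measurable_const_add u
  set ν' : Measure E := ν.map (u + ·) with hν'def
  haveI : IsProbabilityMeasure ν' := Measure.isProbabilityMeasure_map hadd.aemeasurable
  have hν'Lp : MemLp id q ν' := by
    rw [hν'def]
    refine (memLp_map_measure_iff aestronglyMeasurable_id hadd.aemeasurable).mpr ?_
    exact (memLp_const u).add hνLp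
  have hmin : min 1 p⁻¹ = p⁻¹ := min_eq_right (by
    rw [inv_le_one_iff₀]; right; exact hp)
  set S : Measure E → Set ℝ := fun x =>
    {r : ℝ | ∃ T : Measure (E × E), T.map Prod.fst = x ∧ T.map Prod.snd = μ ∧
      r = (∫ z, ‖z.1 - z.2‖ ^ p ∂T) ^ p⁻¹} with hSdef
  have hW : ∀ x : Measure E, wassersteinDist p x μ = sInf (S x) := by
    intro x; rw [wassersteinDist, hmin]
  have hS0 : ∀ x : Measure E, ∀ r ∈ S x, (0 : ℝ) ≤ r := by
    rintro x r ⟨T, -, -, rfl⟩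
    exact Real.rpow_nonneg (integral_nonneg fun z => Real.rpow_nonneg (norm_nonneg _) p) _
  have hbdd : ∀ x : Measure E, BddBelow (S x) := fun x => ⟨0, fun r hr => hS0 x r hr⟩
  have hne : ∀ (x : Measure E), IsProbabilityMeasure x → (S x).Nonempty := by
    intro x hx
    refine ⟨_, x.prod μ, ?_, ?_, rfl⟩
    · simp [measure_univ]
    · simp [measure_univ]
  -- upper bound
  have hub : ∀ r ∈ S ν, sInf (S ν') ≤ ‖u‖ + r := by
    rintro r ⟨T, hT1, hT2, rfl⟩
    haveI : IsProbabilityMeasure T := aux_prob hT2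
    set φ : E × E → E × E := fun z => (u + z.1, z.2) with hφdef
    have hφ : Measurable φ := (hadd.comp measurable_fst).prodMk measurable_snd
    have hmem : (∫ z, ‖z.1 - z.2‖ ^ p ∂(T.map φ)) ^ p⁻¹ ∈ S ν' := by
      refine ⟨T.map φ, ?_, ?_, rfl⟩
      · rw [Measure.map_map measurable_fst hφ]
        have : Prod.fst ∘ φ = (fun y : E => u + y) ∘ Prod.fst := rfl
        rw [this, ← Measure.map_map hadd measurable_fst, hT1]
      · rw [Measure.map_map measurable_snd hφ]
        exact hT2
    have hF : MemLp (fun z : E × E => z.1 - z.2) q T :=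
      aux_coupling_memLp hp hT1 hT2 hνLp hμLp
    have hGmeas : AEStronglyMeasurable (fun z : E × E => z.1 - z.2) (T.map φ) :=
      (measurable_fst.sub measurable_snd).aestronglyMeasurable
    have hcost : (∫ z, ‖z.1 - z.2‖ ^ p ∂(T.map φ)) ^ p⁻¹
        ≤ ‖u‖ + (∫ z, ‖z.1 - z.2‖ ^ p ∂T) ^ p⁻¹ := by
      rw [aux_cost_eq hp, aux_cost_eq hp]
      have hmap : eLpNorm (fun z : E × E => z.1 - z.2) q (T.map φ)
          = eLpNorm (fun z : E × E => u + (z.1 - z.2)) q T := by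
        rw [eLpNorm_map_measure hGmeas hφ.aemeasurable]
        congr 1
        funext z
        show (u + z.1) - z.2 = u + (z.1 - z.2)
        abel
      have hle : eLpNorm (fun z : E × E => u + (z.1 - z.2)) q T
          ≤ (‖u‖₊ : ENNReal) + eLpNorm (fun z : E × E => z.1 - z.2) q T := by
        refine le_trans (eLpNorm_add_le aestronglyMeasurable_const hF.1 hq1) ?_
        rw [eLpNorm_const u hq0 (NeZero.ne' T).symm]
        simp [measure_univ]
        exact le_rfl
      have hfin : (‖u‖₊ : ENNReal) + eLpNorm (fun z : E × E => z.1 - z.2) q T ≠ ⊤ :=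
        ENNReal.add_ne_top.mpr ⟨ENNReal.coe_ne_top, hF.2.ne⟩
      calc (eLpNorm (fun z : E × E => z.1 - z.2) q (T.map φ)).toReal
          ≤ ((‖u‖₊ : ENNReal) + eLpNorm (fun z : E × E => z.1 - z.2) q T).toReal := by
            rw [hmap]; exact ENNReal.toReal_mono hfin hle
        _ = ‖u‖ + (eLpNorm (fun z : E × E => z.1 - z.2) q T).toReal := by
            rw [ENNReal.toReal_add ENNReal.coe_ne_top hF.2.ne, ENNReal.coe_toReal, coe_nnnorm]
    exact (csInf_le (hbdd _) hmem).trans hcost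
  -- lower bound ingredients
  have hνInt : Integrable (fun y : E => y) ν :=
    memLp_one_iff_integrable.mp (hνLp.mono_exponent hq1)
  have hmean : ∫ y, y ∂ν' = u + ∫ y, y ∂ν := by
    have key : ∫ y, y ∂(ν.map (fun y => u + y)) = ∫ y, (u + y) ∂ν :=
      integral_map (f := fun y : E => y) hadd.aemeasurable aestronglyMeasurable_id
    rw [hν'def, key, integral_add (integrable_const u) hνInt, integral_const]
    simp [measure_univ]
  have hlb : ∀ r ∈ S ν', ∀ s ∈ S ν, ‖u‖ ≤ r + s := by
    rintro r ⟨T, hT1, hT2, rfl⟩ s ⟨T', hT'1, hT'2, rfl⟩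
    have m1 := aux_mean_le_cost hp hT1 hT2 hν'Lp hμLp
    have m2 := aux_mean_le_cost hp hT'1 hT'2 hνLp hμLp
    have hu : ((∫ y, y ∂ν') - ∫ y, y ∂μ) - ((∫ y, y ∂ν) - ∫ y, y ∂μ) = u := by
      rw [hmean]; abel
    calc ‖u‖ = ‖((∫ y, y ∂ν') - ∫ y, y ∂μ) - ((∫ y, y ∂ν) - ∫ y, y ∂μ)‖ := by rw [hu]
      _ ≤ ‖(∫ y, y ∂ν') - ∫ y, y ∂μ‖ + ‖(∫ y, y ∂ν) - ∫ y, y ∂μ‖ := norm_sub_le _ _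
      _ ≤ _ := add_le_add m1 m2
  constructor
  · rw [hW, hW]
    have h1 : ∀ s ∈ S ν, ‖u‖ - s ≤ sInf (S ν') := fun s hs =>
      le_csInf (hne ν' inferInstance) fun r hr => by linarith [hlb r hr s hs]
    have h2 : ‖u‖ - sInf (S ν') ≤ sInf (S ν) :=
      le_csInf (hne ν inferInstance) fun s hs => by linarith [h1 s hs]
    linarith
  · rw [hW, hW]
    have := le_csInf (hne ν inferInstance) fun r hr =>
      (by linarith [hub r hr] : sInf (S ν') - ‖u‖ ≤ r)
    linarith

end Aux

/-- Let `A ∈ ℝ^{m×m}` have all eigenvalues of positive real part, let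
`X_t(x) = e^{-At} x + X_t(0)` be the Ornstein–Uhlenbeck solution family (the Lévy driven
convolution part being `X_t(0)`), with finite `p`-th moments (`p ≥ 1`), and let `μ` be
the invariant measure, with finite `p`-th moment. Then for all `t ≥ 0` and `x ∈ ℝ^m`:
`|e^{-At}x| − W_p(X_t(0), μ) ≤ W_p(X_t(x), μ) ≤ |e^{-At}x| + W_p(X_t(0), μ)`. -/
theorem stmt_15 {m : ℕ} {Ω : Type*} [MeasurableSpace Ω] (P : Measure Ω)
    [IsProbabilityMeasure P] (p : ℝ) (hp : 1 ≤ p)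
    (A : Matrix (Fin m) (Fin m) ℝ)
    (hA : ∀ μ' ∈ spectrum ℂ (A.map (Complex.ofReal ·)), 0 < μ'.re)
    (X : ℝ → (Fin m → ℝ) → Ω → EuclideanSpace ℝ (Fin m))
    (hmeas : ∀ t x, AEMeasurable (X t x) P)
    (hdec : ∀ t x ω, X t x ω = euc ((NormedSpace.exp (-(t • A))).mulVec x) + X t 0 ω)
    (hmom : ∀ t, ∫⁻ ω, (‖X t 0 ω‖₊ : ENNReal) ^ p ∂P ≠ ⊤)
    (μ : Measure (EuclideanSpace ℝ (Fin m))) [IsProbabilityMeasure μ]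
    (hμmom : ∫⁻ y, (‖y‖₊ : ENNReal) ^ p ∂μ ≠ ⊤) :
    ∀ t : ℝ, 0 ≤ t → ∀ x : Fin m → ℝ,
      ‖euc ((NormedSpace.exp (-(t • A))).mulVec x)‖ -
          wassersteinDist p (P.map (X t 0)) μ ≤
        wassersteinDist p (P.map (X t x)) μ ∧
      wassersteinDist p (P.map (X t x)) μ ≤
        ‖euc ((NormedSpace.exp (-(t • A))).mulVec x)‖ +
          wassersteinDist p (P.map (X t 0)) μ := by
  intro t ht x
  set u : EuclideanSpace ℝ (Fin m) := euc ((NormedSpace.exp (-(t • A))).mulVec x) with hu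
  have hX0 : AEMeasurable (X t 0) P := hmeas t 0
  haveI : IsProbabilityMeasure (P.map (X t 0)) := Measure.isProbabilityMeasure_map hX0
  have hadd : Measurable fun y : EuclideanSpace ℝ (Fin m) => u + y := measurable_const_add u
  have hPmap : P.map (X t x) = (P.map (X t 0)).map (u + ·) := by
    have hx : X t x = fun ω => u + X t 0 ω := funext (hdec t x)
    rw [hx]
    exact (AEMeasurable.map_map_of_aemeasurable hadd.aemeasurable hX0).symm
  have hνmom : ∫⁻ y, (‖y‖₊ : ENNReal) ^ p ∂(P.map (X t 0)) ≠ ⊤ := by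
    rw [lintegral_map' (((measurable_nnnorm.coe_nnreal_ennreal).pow_const p).aemeasurable) hX0]
    exact hmom t
  rw [hPmap]
  exact aux_shift hp (P.map (X t 0)) μ hνmom hμmom u
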